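/- Let ψ = Σ_{i=1}^{d_1} λ_i μ_i ⊗ ν_i be a vector in ℂ^{d_1}⊗ℂ^{d_2} in Schmidt form, i.e., λ_i ≥ 0, {μ_i} orthonormal in ℂ^{d_1} and {ν_i} orthonormal in ℂ^{d_2}. Then every eigenvalue of the Hermitian matrix (ψψ*)^{T_A} belongs to the set {λ_i λ_j : i ≠ j} ∪ {−λ_i λ_j : i ≠ j} ∪ {λ_i² : i} ∪ {0}. In particular, the largest eigenvalue of (ψψ*)^{T_A} equals max_i λ_i² (provided not all λ_i vanish). -/

import Mathlib

/-!
In the orthonormal family `e_{ab} = conj μ_b ⊗ ν_a`, the partial transpose of `ψψ*` is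
`∑_{a,b} λ_a λ_b |e_{ab}⟩⟨e_{ba}|`: it sends `e_{ab}` to `λ_a λ_b e_{ba}` and kills the orthogonal
complement of the family. Hence it acts by `±λ_a λ_b` on the span of `e_{ab}, e_{ba}` for `a ≠ b`,
by `λ_a²` on `e_{aa}` and by `0` elsewhere. Since `|λ_a λ_b| ≤ max (λ_a², λ_b²)`, the largest
eigenvalue is `λ_a²` for `a` maximising `λ_a²`, with eigenvector `e_{aa}`.
-/

open Matrix Finset ComplexOrder

/-- Partial transpose with respect to the first tensor factor of `ℂ^{d₁} ⊗ ℂ^{d₂}`: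
`(X^{T_A})_{(i,j),(k,l)} = X_{(k,j),(i,l)}`. -/
def ptA {d1 d2 : ℕ} (X : Matrix (Fin d1 × Fin d2) (Fin d1 × Fin d2) ℂ) :
    Matrix (Fin d1 × Fin d2) (Fin d1 × Fin d2) ℂ :=
  fun p q => X (q.1, p.2) (p.1, q.2)

section WeightedSwap

variable {K ι n : Type*} [CommRing K] [Fintype ι] [Fintype n]

def weightedSwap (w : ι → K) (e f : ι × ι → n → K) : Matrix n n K :=
  ∑ i, (w i.1 * w i.2) • vecMulVec (e i) (f i.swap)

variable (w : ι → K) {e f : ι × ι → n → K}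

theorem weightedSwap_mulVec (v : n → K) :
    weightedSwap w e f *ᵥ v = ∑ i, (w i.1 * w i.2 * (f i.swap ⬝ᵥ v)) • e i := by
  simp only [weightedSwap, sum_mulVec, smul_mulVec, vecMulVec_mulVec, op_smul_eq_smul, smul_smul]

variable [DecidableEq ι]

theorem dotProduct_weightedSwap_mulVec (hfe : ∀ i j, f i ⬝ᵥ e j = if i = j then 1 else 0)
    (i : ι × ι) (v : n → K) :
    f i ⬝ᵥ (weightedSwap w e f *ᵥ v) = w i.1 * w i.2 * (f i.swap ⬝ᵥ v) := by
  simp [weightedSwap_mulVec, dotProduct_sum, dotProduct_smul, hfe]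

theorem weightedSwap_mulVec_eq_smul_swap (hfe : ∀ i j, f i ⬝ᵥ e j = if i = j then 1 else 0)
    (j : ι × ι) : weightedSwap w e f *ᵥ e j = (w j.1 * w j.2) • e j.swap := by
  simp [weightedSwap_mulVec, hfe, Prod.swap_eq_iff_eq_swap, mul_comm]

theorem eigenvalue_weightedSwap_cases [IsDomain K]
    (hfe : ∀ i j, f i ⬝ᵥ e j = if i = j then 1 else 0)
    {t : K} {v : n → K} (hv : v ≠ 0) (htv : weightedSwap w e f *ᵥ v = t • v) :
    (∃ a b, a ≠ b ∧ (t = w a * w b ∨ t = -(w a * w b))) ∨ (∃ a, t = w a * w a) ∨ t = 0 := by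
  have hcoeff (a b : ι) : t * (f (a, b) ⬝ᵥ v) = w a * w b * (f (b, a) ⬝ᵥ v) := by
    simpa [htv] using dotProduct_weightedSwap_mulVec w hfe (a, b) v
  by_cases hker : ∀ i, f i ⬝ᵥ v = 0
  · have : t • v = 0 := by simp [← htv, weightedSwap_mulVec, hker]
    exact Or.inr (Or.inr ((smul_eq_zero.mp this).resolve_right hv))
  push Not at hker
  obtain ⟨⟨a, b⟩, hab⟩ := hker
  rcases eq_or_ne a b with rfl | hne
  · exact Or.inr (Or.inl ⟨a, mul_right_cancel₀ hab (hcoeff a a)⟩)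
  · -- the coefficient relation at `(a, b)` and at `(b, a)` gives `t² = (w_a w_b)²`
    have hsq : t * t = (w a * w b) * (w a * w b) := by
      refine mul_right_cancel₀ hab ?_
      linear_combination t * hcoeff a b + w a * w b * hcoeff b a
    exact Or.inl ⟨a, b, hne, mul_self_eq_mul_self_iff.mp hsq⟩

end WeightedSwap

section Schmidt

variable {m n ι : Type*}

def kroneckerVec {R : Type*} [Mul R] (x : m → R) (y : n → R) : m × n → R :=
  fun q => x q.1 * y q.2

theorem kroneckerVec_dotProduct_kroneckerVec {R : Type*} [CommSemiring R] [Fintype m] [Fintype n]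
    (x x' : m → R) (y y' : n → R) :
    kroneckerVec x y ⬝ᵥ kroneckerVec x' y' = (x ⬝ᵥ x') * (y ⬝ᵥ y') := by
  simp only [dotProduct, kroneckerVec, Fintype.sum_prod_type, sum_mul_sum]
  exact sum_congr rfl fun _ _ => sum_congr rfl fun _ _ => by ring

theorem kroneckerVec_biorthogonal {R : Type*} [CommSemiring R] [StarRing R] [Fintype m]
    [Fintype n] [DecidableEq ι] {μ : ι → m → R} {ν : ι → n → R}
    (hμ : ∀ i j, star (μ i) ⬝ᵥ μ j = if i = j then 1 else 0)
    (hν : ∀ i j, star (ν i) ⬝ᵥ ν j = if i = j then 1 else 0) (i j : ι × ι) :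
    kroneckerVec (μ i.2) (star (ν i.1)) ⬝ᵥ kroneckerVec (star (μ j.2)) (ν j.1) =
      if i = j then 1 else 0 := by
  rw [kroneckerVec_dotProduct_kroneckerVec, dotProduct_comm, hμ, hν, ite_zero_mul_ite_zero,
    one_mul]
  exact if_congr (by rw [Prod.ext_iff, eq_comm, and_comm]) rfl rfl

theorem Orthonormal.star_dotProduct_eq_ite {𝕜 : Type*} [RCLike 𝕜] [Fintype m] [DecidableEq ι]
    {v : ι → EuclideanSpace 𝕜 m} (hv : Orthonormal 𝕜 v) (i j : ι) :
    star (v i).ofLp ⬝ᵥ (v j).ofLp = if i = j then 1 else 0 := by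
  rw [dotProduct_comm, ← EuclideanSpace.inner_eq_star_dotProduct, orthonormal_iff_ite.mp hv]

theorem ptA_vecMulVec_star_eq_weightedSwap {d1 d2 : ℕ} [Fintype ι] (lam : ι → ℝ)
    (μ : ι → Fin d1 → ℂ) (ν : ι → Fin d2 → ℂ) (ψ : Fin d1 × Fin d2 → ℂ)
    (hψ : ∀ x, ψ x = ∑ i, (lam i : ℂ) * μ i x.1 * ν i x.2) :
    ptA (vecMulVec ψ (star ψ)) = weightedSwap (fun i => (lam i : ℂ))
      (fun i => kroneckerVec (star (μ i.2)) (ν i.1))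
      (fun i => kroneckerVec (μ i.2) (star (ν i.1))) := by
  ext p q
  simp only [ptA, vecMulVec_apply, Pi.star_apply, hψ, star_sum, star_mul', Complex.star_def,
    Complex.conj_ofReal, sum_mul_sum, weightedSwap, Matrix.sum_apply, Matrix.smul_apply,
    kroneckerVec, Fintype.sum_prod_type, Prod.swap, smul_eq_mul]
  exact sum_congr rfl fun _ _ => sum_congr rfl fun _ _ => by ring

end Schmidt

theorem Matrix.IsHermitian.iSup_eigenvalues_eq {𝕜 n : Type*} [RCLike 𝕜] [Fintype n]
    [DecidableEq n] {A : Matrix n n 𝕜} (hA : A.IsHermitian) {r : ℝ}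
    (hle : ∀ p, hA.eigenvalues p ≤ r) {v : n → 𝕜} (hv : v ≠ 0) (hAv : A *ᵥ v = (r : 𝕜) • v) :
    ⨆ p, hA.eigenvalues p = r := by
  have hr : (r : 𝕜) ∈ spectrum 𝕜 A := by
    rw [← spectrum_toLin', ← Module.End.hasEigenvalue_iff_mem_spectrum]
    exact Module.End.hasEigenvalue_of_hasEigenvector
      ⟨Module.End.mem_eigenspace_iff.mpr (by rwa [toLin'_apply]), hv⟩
  obtain ⟨_, ⟨p, rfl⟩, hp⟩ := hA.spectrum_eq_image_range ▸ hr
  have : Nonempty n := ⟨p⟩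
  exact le_antisymm (ciSup_le hle)
    (RCLike.ofReal_inj.mp hp ▸ le_ciSup (Set.finite_range _).bddAbove p)

theorem Matrix.IsHermitian.exists_mulVec_eq_eigenvalues_smul {𝕜 n : Type*} [RCLike 𝕜]
    [Fintype n] [DecidableEq n] {A : Matrix n n 𝕜} (hA : A.IsHermitian) (p : n) :
    ∃ v : n → 𝕜, v ≠ 0 ∧ A *ᵥ v = (hA.eigenvalues p : 𝕜) • v :=
  ⟨_, (WithLp.ofLp_eq_zero 2).not.mpr (hA.eigenvectorBasis.orthonormal.ne_zero p),
    by rw [hA.mulVec_eigenvectorBasis, RCLike.real_smul_eq_coe_smul (K := 𝕜)]⟩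

theorem eigenvalues_partial_transpose_pure_state
    {d1 d2 : ℕ} (lam : Fin d1 → ℝ)
    (μ : Fin d1 → EuclideanSpace ℂ (Fin d1)) (hμ : Orthonormal ℂ μ)
    (ν : Fin d1 → EuclideanSpace ℂ (Fin d2)) (hν : Orthonormal ℂ ν)
    (ψ : Fin d1 × Fin d2 → ℂ)
    (hψ : ∀ x, ψ x = ∑ i, (lam i : ℂ) * μ i x.1 * ν i x.2)
    (hH : (ptA (Matrix.vecMulVec ψ (star ψ))).IsHermitian) :
    (∀ t : ℂ, (∃ v : Fin d1 × Fin d2 → ℂ, v ≠ 0 ∧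
        (ptA (Matrix.vecMulVec ψ (star ψ))) *ᵥ v = t • v) →
      (∃ i j, i ≠ j ∧ (t = ((lam i * lam j : ℝ) : ℂ) ∨ t = -((lam i * lam j : ℝ) : ℂ)))
        ∨ (∃ i, t = ((lam i ^ 2 : ℝ) : ℂ)) ∨ t = 0) ∧
    ((∃ i, lam i ≠ 0) → (⨆ p, hH.eigenvalues p) = ⨆ i, lam i ^ 2) := by
  have hM := ptA_vecMulVec_star_eq_weightedSwap lam (fun i => (μ i).ofLp) (fun i => (ν i).ofLp)
    ψ hψ
  have hfe := kroneckerVec_biorthogonal hμ.star_dotProduct_eq_ite hν.star_dotProduct_eq_ite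
  have hspec (t : ℂ) (ht : ∃ v, v ≠ 0 ∧ ptA (vecMulVec ψ (star ψ)) *ᵥ v = t • v) :
      (∃ i j, i ≠ j ∧ (t = ((lam i * lam j : ℝ) : ℂ) ∨ t = -((lam i * lam j : ℝ) : ℂ)))
        ∨ (∃ i, t = ((lam i ^ 2 : ℝ) : ℂ)) ∨ t = 0 := by
    obtain ⟨v, hv, htv⟩ := ht
    rw [hM] at htv
    push_cast
    simpa only [sq] using eigenvalue_weightedSwap_cases _ hfe hv htv
  refine ⟨hspec, fun ⟨i, _⟩ => ?_⟩
  have : Nonempty (Fin d1) := ⟨i⟩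
  obtain ⟨i₀, hi₀⟩ := Finite.exists_max fun i => lam i ^ 2
  rw [le_antisymm (ciSup_le hi₀) (le_ciSup (Finite.bddAbove_range fun i => lam i ^ 2) i₀)]
  have htop := weightedSwap_mulVec_eq_smul_swap (fun i => (lam i : ℂ)) hfe (i₀, i₀)
  rw [← hM] at htop
  refine hH.iSup_eigenvalues_eq (fun p => ?_) ?_ (htop.trans (by push_cast [sq]; rfl))
  · obtain ⟨v, hv, hAv⟩ := hH.exists_mulVec_eq_eigenvalues_smul p
    rw [RCLike.ofReal_eq_complex_ofReal] at hAv
    rcases hspec _ ⟨v, hv, hAv⟩ with ⟨i, j, -, h | h⟩ | ⟨i, h⟩ | h <;> norm_cast at h <;> rw [h]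
    · nlinarith [sq_nonneg (lam i - lam j), hi₀ i, hi₀ j]
    · nlinarith [sq_nonneg (lam i + lam j), hi₀ i, hi₀ j]
    · exact hi₀ i
    · positivity
  · intro h
    simpa [h] using hfe (i₀, i₀) (i₀, i₀)
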